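/- arXiv:1502.07676 — 6 statements merged into one kernel-verified Lean document; each statement's English description precedes it below -/
import Mathlib

section
/- If f is a holomorphic automorphism of a bounded domain D in ℂ^d, z₀ ∈ D, f(z₀) = z₀, and the derivative of f at z₀ is the identity, then f is the identity map on D. -/
/-!
Along a complex line `t ↦ c + t • v` through the fixed point, the displacements
`H n t = f^[n] (c + t • v) - (c + t • v)` of the iterates form a uniformly bounded family of
holomorphic functions, since `D` is bounded. Cauchy estimates for the derivative show that
`f - id` vanishes to second order at `c`, so `H (n + 1) = H n + H 1 + O(t ^ (k + 1))` as soon as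
`H n = O(t ^ k)`. If `k` is the order of vanishing of `H 1`, its `k`-th Taylor coefficient `a`
therefore appears as `n • a` in `H n`, and Cauchy's estimate, uniform in `n`, forces `a = 0`.
Hence `f = id` on every ball about a point where `f` agrees with `id` to first order, and
connectedness of `D` spreads this over all of `D`.
-/

open Metric Set Filter Topology Asymptotics

section CauchyEstimates

variable {E F : Type*} [NormedAddCommGroup E] [NormedSpace ℂ E]
  [NormedAddCommGroup F] [NormedSpace ℂ F]

theorem norm_fderiv_le_of_forall_mem_closedBall_norm_le {f : E → F} {x : E} {r C : ℝ}
    (hr : 0 < r) (hf : DifferentiableOn ℂ f (closedBall x r))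
    (hC : ∀ z ∈ closedBall x r, ‖f z‖ ≤ C) : ‖fderiv ℂ f x‖ ≤ C / r := by
  have hC0 : 0 ≤ C := (norm_nonneg _).trans (hC x (mem_closedBall_self hr.le))
  refine ContinuousLinearMap.opNorm_le_bound _ (by positivity) fun v => ?_
  rcases eq_or_ne v 0 with rfl | hv
  · simp
  have hv' : 0 < ‖v‖ := norm_pos_iff.mpr hv
  have hline : MapsTo (fun t : ℂ => x + t • v) (closedBall 0 (r / ‖v‖)) (closedBall x r) := by
    intro t ht
    rw [mem_closedBall_zero_iff] at ht
    rw [mem_closedBall, dist_eq_norm, add_sub_cancel_left, norm_smul]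
    calc ‖t‖ * ‖v‖ ≤ r / ‖v‖ * ‖v‖ := by gcongr
      _ = r := div_mul_cancel₀ _ hv'.ne'
  have hslice : DiffContOnCl ℂ (fun t : ℂ => f (x + t • v)) (ball 0 (r / ‖v‖)) := by
    apply DifferentiableOn.diffContOnCl
    rw [closure_ball _ (by positivity : (0 : ℝ) < r / ‖v‖).ne']
    exact hf.comp (by fun_prop) hline
  have hderiv : deriv (fun t : ℂ => f (x + t • v)) 0 = fderiv ℂ f x v :=
    ((hf.differentiableAt (closedBall_mem_nhds x hr)).hasFDerivAt.hasLineDerivAt v).deriv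
  calc ‖fderiv ℂ f x v‖ = ‖deriv (fun t : ℂ => f (x + t • v)) 0‖ := by rw [hderiv]
    _ ≤ C / (r / ‖v‖) := Complex.norm_deriv_le_of_forall_mem_sphere_norm_le (by positivity)
        hslice fun t ht => hC _ (hline (sphere_subset_closedBall ht))
    _ = C / r * ‖v‖ := by field_simp

theorem norm_sub_le_of_forall_mem_closedBall_norm_le {f : E → F} {c : E} {r R M : ℝ}
    (hrR : r < R) (hf : DifferentiableOn ℂ f (closedBall c R))
    (hM : ∀ z ∈ closedBall c R, ‖f z‖ ≤ M) {x y : E} (hx : x ∈ closedBall c r)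
    (hy : y ∈ closedBall c r) : ‖f x - f y‖ ≤ M / (R - r) * ‖x - y‖ := by
  have hsub : ∀ z ∈ closedBall c r, closedBall z (R - r) ⊆ closedBall c R := fun z hz =>
    closedBall_subset_closedBall' (by rw [mem_closedBall] at hz; linarith)
  refine (convex_closedBall c r).norm_image_sub_le_of_norm_fderiv_le (𝕜 := ℂ) (fun z hz => ?_)
    (fun z hz => ?_) hy hx
  · exact hf.differentiableAt (mem_of_superset (closedBall_mem_nhds z (sub_pos.2 hrR)) (hsub z hz))
  · exact norm_fderiv_le_of_forall_mem_closedBall_norm_le (sub_pos.2 hrR) (hf.mono (hsub z hz))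
      fun w hw => hM w (hsub z hz hw)

theorem norm_fderiv_sub_fderiv_le {f : E → F} {c : E} {r M : ℝ} (hr : 0 < r)
    (hf : DifferentiableOn ℂ f (closedBall c (3 * r)))
    (hM : ∀ z ∈ closedBall c (3 * r), ‖f z‖ ≤ M) {w : E} (hw : w ∈ closedBall c r) :
    ‖fderiv ℂ f w - fderiv ℂ f c‖ ≤ M / r ^ 2 * ‖w - c‖ := by
  have hshift : ∀ z ∈ closedBall c r, z + (w - c) ∈ closedBall c (2 * r) := fun z hz => by
    rw [mem_closedBall, dist_eq_norm] at *
    calc ‖z + (w - c) - c‖ ≤ ‖z - c‖ + ‖w - c‖ := by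
          rw [add_sub_right_comm]; exact norm_add_le _ _
      _ ≤ 2 * r := by linarith
  have hsub : closedBall c (2 * r) ⊆ closedBall c (3 * r) :=
    closedBall_subset_closedBall (by linarith)
  have hbound : ∀ z ∈ closedBall c r, ‖f (z + (w - c)) - f z‖ ≤ M / r * ‖w - c‖ := by
    intro z hz
    have h := norm_sub_le_of_forall_mem_closedBall_norm_le (by linarith : 2 * r < 3 * r) hf hM
      (hshift z hz) (closedBall_subset_closedBall (by linarith) hz)
    rwa [show 3 * r - 2 * r = r by ring, add_sub_cancel_left] at h
  have hdiff : DifferentiableOn ℂ (fun z => f (z + (w - c)) - f z) (closedBall c r) :=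
    (hf.comp (by fun_prop) fun z hz => hsub (hshift z hz)).sub
      (hf.mono (closedBall_subset_closedBall (by linarith)))
  have hderiv : fderiv ℂ (fun z => f (z + (w - c)) - f z) c = fderiv ℂ f w - fderiv ℂ f c := by
    have hnhds : ∀ z ∈ closedBall c r, closedBall c (3 * r) ∈ 𝓝 z := fun z hz =>
      mem_of_superset (closedBall_mem_nhds z (by positivity : 0 < 2 * r))
        (closedBall_subset_closedBall' (by rw [mem_closedBall] at hz; linarith))
    have hfw : DifferentiableAt ℂ (fun z => f (z + (w - c))) c := by
      have : DifferentiableAt ℂ f (c + (w - c)) := by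
        rw [add_sub_cancel]; exact hf.differentiableAt (hnhds w hw)
      exact this.comp c (by fun_prop)
    have hfc : DifferentiableAt ℂ f c := hf.differentiableAt (hnhds c (mem_closedBall_self hr.le))
    rw [fderiv_fun_sub hfw hfc, fderiv_comp_add_right, add_sub_cancel]
  calc ‖fderiv ℂ f w - fderiv ℂ f c‖ ≤ M / r * ‖w - c‖ / r := by
        rw [← hderiv]
        exact norm_fderiv_le_of_forall_mem_closedBall_norm_le hr hdiff hbound
    _ = M / r ^ 2 * ‖w - c‖ := by ring

theorem isBigO_image_sub_image_sub_fderiv {f : E → F} {c : E}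
    (hf : ∀ᶠ z in 𝓝 c, DifferentiableAt ℂ f z) :
    (fun p : E × E => f p.1 - f p.2 - fderiv ℂ f c (p.1 - p.2)) =O[𝓝 (c, c)]
      fun p => ‖p - (c, c)‖ * ‖p.1 - p.2‖ := by
  obtain ⟨ε, hε, hball⟩ := Metric.eventually_nhds_iff_ball.mp <| hf.and <|
    hf.self_of_nhds.continuousAt.norm.eventually (gt_mem_nhds (lt_add_one ‖f c‖))
  set r := ε / 4 with hr_def
  have hr : 0 < r := by positivity
  have hsub : closedBall c (3 * r) ⊆ ball c ε := closedBall_subset_ball (by linarith [hr_def])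
  have hdiff : DifferentiableOn ℂ f (closedBall c (3 * r)) := fun z hz =>
    (hball z (hsub hz)).1.differentiableWithinAt
  have hM : ∀ z ∈ closedBall c (3 * r), ‖f z‖ ≤ ‖f c‖ + 1 := fun z hz => (hball z (hsub hz)).2.le
  refine IsBigO.of_bound ((‖f c‖ + 1) / r ^ 2) ?_
  filter_upwards [ball_mem_nhds (c, c) hr] with p hp
  set s := ‖p - (c, c)‖
  have hs : s ≤ r := (mem_ball_iff_norm.mp hp).le
  have hs_r : closedBall c s ⊆ closedBall c r := closedBall_subset_closedBall hs
  have hs_3r : closedBall c s ⊆ closedBall c (3 * r) := closedBall_subset_closedBall (by linarith)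
  have h1 : p.1 ∈ closedBall c s := by
    rw [mem_closedBall_iff_norm]; exact norm_fst_le (p - (c, c))
  have h2 : p.2 ∈ closedBall c s := by
    rw [mem_closedBall_iff_norm]; exact norm_snd_le (p - (c, c))
  -- mean value inequality for `z ↦ f z - f' c z`, whose derivative is `O(s)` on `closedBall c s`
  have hmvt := (convex_closedBall c s).norm_image_sub_le_of_norm_fderiv_le (𝕜 := ℂ)
    (f := fun z => f z - fderiv ℂ f c z) (C := (‖f c‖ + 1) / r ^ 2 * s) (fun z hz => ?_)
    (fun z hz => ?_) h2 h1
  · rw [sub_sub_sub_comm, ← map_sub] at hmvt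
    rw [Real.norm_eq_abs, abs_of_nonneg (by positivity), ← mul_assoc]
    exact hmvt
  · exact (hball z (hsub (hs_3r hz))).1.sub (fderiv ℂ f c).differentiableAt
  · rw [fderiv_fun_sub (hball z (hsub (hs_3r hz))).1 (fderiv ℂ f c).differentiableAt,
      ContinuousLinearMap.fderiv]
    calc ‖fderiv ℂ f z - fderiv ℂ f c‖ ≤ (‖f c‖ + 1) / r ^ 2 * ‖z - c‖ :=
          norm_fderiv_sub_fderiv_le hr hdiff hM (hs_r hz)
      _ ≤ (‖f c‖ + 1) / r ^ 2 * s := by gcongr; exact mem_closedBall_iff_norm.mp hz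

end CauchyEstimates

section AnalyticOrder

variable {𝕜 E : Type*} [NontriviallyNormedField 𝕜] [NormedAddCommGroup E] [NormedSpace 𝕜 E]

theorem AnalyticAt.natCast_le_analyticOrderAt_iff_isBigO {f : 𝕜 → E} {z₀ : 𝕜}
    (hf : AnalyticAt 𝕜 f z₀) {n : ℕ} :
    ↑n ≤ analyticOrderAt f z₀ ↔ f =O[𝓝 z₀] fun z => (z - z₀) ^ n := by
  constructor
  · intro hn
    obtain ⟨g, hg, hfg⟩ := (natCast_le_analyticOrderAt hf).mp hn
    have hg1 : g =O[𝓝 z₀] fun _ => (1 : 𝕜) := hg.continuousAt.tendsto.isBigO_one 𝕜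
    refine ((isBigO_refl (fun z => (z - z₀) ^ n) _).smul hg1).congr' ?_ ?_
    · filter_upwards [hfg] with z hz using hz.symm
    · simp
  · intro hO
    by_contra hlt
    rw [not_le] at hlt
    obtain ⟨m, hm⟩ := ENat.ne_top_iff_exists.mp hlt.ne_top
    obtain ⟨g, hg, hg0, hfg⟩ := hf.analyticOrderAt_eq_natCast.mp hm.symm
    have hmn : m < n := by rw [← hm] at hlt; exact_mod_cast hlt
    have hg_pos : ∀ᶠ z in 𝓝 z₀, ‖g z₀‖ / 2 ≤ ‖g z‖ :=
      hg.continuousAt.norm.eventually (le_mem_nhds (by simpa using hg0))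
    have h1g : (fun _ => (1 : 𝕜)) =O[𝓝 z₀] g :=
      (isBigO_const_left_iff_pos_le_norm one_ne_zero).mpr ⟨_, by simpa using hg0, hg_pos⟩
    have hmf : (fun z => (z - z₀) ^ m) =O[𝓝 z₀] f := by
      refine ((isBigO_refl (fun z => (z - z₀) ^ m) _).smul h1g).congr' ?_ ?_
      · simp
      · filter_upwards [hfg] with z hz using hz.symm
    have hnm : (fun z => (z - z₀) ^ n) =o[𝓝 z₀] fun z => (z - z₀) ^ m :=
      (isLittleO_pow_pow hmn).comp_tendsto (tendsto_sub_nhds_zero_iff.mpr tendsto_id)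
    have hne : ∃ᶠ z in 𝓝 z₀, (z - z₀) ^ m ≠ 0 :=
      (eventually_nhdsWithin_of_forall (s := {z₀}ᶜ) fun z hz =>
        pow_ne_zero m (sub_ne_zero.mpr hz)).frequently
        |>.filter_mono nhdsWithin_le_nhds
    exact isLittleO_irrefl hne ((hmf.trans hO).trans_isLittleO hnm)

theorem iteratedDeriv_eq_nsmul_of_approx_additive [CharZero 𝕜] [CompleteSpace E]
    {H : ℕ → 𝕜 → E} (hH : ∀ n, AnalyticAt 𝕜 (H n) 0) (hH0 : H 0 = 0) {k : ℕ}
    (hrec : ∀ n, ↑k ≤ analyticOrderAt (H n) 0 →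
      ↑(k + 1) ≤ analyticOrderAt (H (n + 1) - H n - H 1) 0)
    (hk : ↑k ≤ analyticOrderAt (H 1) 0) (n : ℕ) :
    ↑k ≤ analyticOrderAt (H n) 0 ∧ iteratedDeriv k (H n) 0 = n • iteratedDeriv k (H 1) 0 := by
  induction n with
  | zero =>
    have h0 : analyticOrderAt (0 : 𝕜 → E) 0 = ⊤ :=
      analyticOrderAt_eq_top.mpr (.of_forall fun _ => rfl)
    simp [hH0, h0]
  | succ n ih =>
    have hadd : ∀ i ≤ k, iteratedDeriv i (H (n + 1)) 0 =
        iteratedDeriv i (H n) 0 + iteratedDeriv i (H 1) 0 := by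
      intro i hi
      have hE := (natCast_le_analyticOrderAt_iff_iteratedDeriv_eq_zero
        (((hH _).sub (hH _)).sub (hH _))).mp (hrec n ih.1) i (by omega)
      rw [iteratedDeriv_sub (((hH _).sub (hH _)).contDiffAt) (hH _).contDiffAt,
        iteratedDeriv_sub (hH _).contDiffAt (hH _).contDiffAt, sub_sub, sub_eq_zero] at hE
      exact hE
    rw [natCast_le_analyticOrderAt_iff_iteratedDeriv_eq_zero (hH _)] at hk ih ⊢
    refine ⟨fun i hi => ?_, ?_⟩
    · rw [hadd i hi.le, ih.1 i hi, hk i hi, add_zero]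
    · rw [hadd k le_rfl, ih.2, succ_nsmul]

end AnalyticOrder

section Iteration

variable {E : Type*} [NormedAddCommGroup E] [NormedSpace ℂ E]

theorem eq_zero_of_forall_norm_nsmul_le {a : E} {C : ℝ} (h : ∀ n : ℕ, ‖n • a‖ ≤ C) : a = 0 := by
  by_contra ha
  obtain ⟨n, hn⟩ := exists_nat_gt (C / ‖a‖)
  have := h n
  rw [← Nat.cast_smul_eq_nsmul ℂ, norm_smul, Complex.norm_natCast] at this
  rw [div_lt_iff₀ (norm_pos_iff.mpr ha)] at hn
  linarith

variable [CompleteSpace E]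

theorem eventuallyEq_zero_of_approx_additive {H : ℕ → ℂ → E} {σ B : ℝ} (hσ : 0 < σ)
    (hH : ∀ n, DifferentiableOn ℂ (H n) (closedBall 0 σ)) (hH0 : H 0 = 0)
    (hB : ∀ n, ∀ t ∈ sphere (0 : ℂ) σ, ‖H n t‖ ≤ B)
    (hrec : ∀ n k : ℕ, ↑k ≤ analyticOrderAt (H n) 0 →
      ↑(k + 1) ≤ analyticOrderAt (H (n + 1) - H n - H 1) 0) :
    H 1 =ᶠ[𝓝 0] 0 := by
  have hH' : ∀ n, AnalyticAt ℂ (H n) 0 := fun n =>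
    (hH n).analyticAt (closedBall_mem_nhds 0 hσ)
  refine analyticOrderAt_eq_top.mp (ENat.eq_top_iff_forall_ge.mpr fun k => ?_)
  induction k with
  | zero => simp
  | succ k ih =>
    have hgrowth := iteratedDeriv_eq_nsmul_of_approx_additive hH' hH0 (hrec · k) ih
    have hzero : iteratedDeriv k (H 1) 0 = 0 := by
      refine eq_zero_of_forall_norm_nsmul_le (C := k.factorial * B / σ ^ k) fun n => ?_
      rw [← (hgrowth n).2]
      refine Complex.norm_iteratedDeriv_le_of_forall_mem_sphere_norm_le k hσ ?_ (hB n)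
      exact (hH n).diffContOnCl_ball subset_rfl
    rw [natCast_le_analyticOrderAt_iff_iteratedDeriv_eq_zero (hH' 1)] at ih ⊢
    intro i hi
    rcases Nat.lt_succ_iff_lt_or_eq.mp hi with hi | rfl
    exacts [ih i hi, hzero]

end Iteration

section Cartan

variable {E : Type*} [NormedAddCommGroup E] [NormedSpace ℂ E] [CompleteSpace E]

def iterateDisplacement (f : E → E) (c v : E) (n : ℕ) (t : ℂ) : E :=
  f^[n] (c + t • v) - (c + t • v)

theorem le_analyticOrderAt_iterateDisplacement_sub {D : Set E} {f : E → E}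
    (hf : DifferentiableOn ℂ f D) (hfD : MapsTo f D D) {c : E} (hD : D ∈ 𝓝 c) (hfc : f c = c)
    (hfc' : fderiv ℂ f c = .id ℂ E) (v : E) {n k : ℕ}
    (hk : ↑k ≤ analyticOrderAt (iterateDisplacement f c v n) 0) :
    ↑(k + 1) ≤ analyticOrderAt (iterateDisplacement f c v (n + 1) -
      iterateDisplacement f c v n - iterateDisplacement f c v 1) 0 := by
  set w : ℂ → E := fun t => c + t • v
  have hw0 : w 0 = c := by simp [w]
  have hwD : w ⁻¹' D ∈ 𝓝 0 :=
    (by fun_prop : Continuous w).continuousAt.preimage_mem_nhds (by rwa [hw0])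
  have hanalytic : ∀ m, AnalyticAt ℂ (iterateDisplacement f c v m) 0 := fun m =>
    (((hf.iterate hfD m).comp (by fun_prop) (mapsTo_preimage _ _)).sub
      (by fun_prop)).analyticAt hwD
  rw [(hanalytic n).natCast_le_analyticOrderAt_iff_isBigO] at hk
  rw [(((hanalytic _).sub (hanalytic _)).sub (hanalytic _)).natCast_le_analyticOrderAt_iff_isBigO]
  set γ : ℂ → E := fun t => f^[n] (w t)
  have hγ0 : γ 0 = c := by simp only [γ, hw0, Function.iterate_fixed hfc]
  have hγ : DifferentiableAt ℂ γ 0 := by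
    have : DifferentiableAt ℂ f^[n] (w 0) := by
      rw [hw0]; exact (hf.iterate hfD n).differentiableAt hD
    exact this.comp 0 (by fun_prop)
  have hcurve : Tendsto (fun t => (γ t, w t)) (𝓝 0) (𝓝 (c, c)) := by
    have := (hγ.continuousAt.prodMk (by fun_prop : Continuous w).continuousAt).tendsto
    rwa [hγ0, hw0] at this
  have hsecond := (isBigO_image_sub_image_sub_fderiv
    (eventually_mem_nhds_iff.mpr hD |>.mono fun _ => hf.differentiableAt)).comp_tendsto hcurve
  have hΦ : (fun t => (γ t, w t) - (c, c)) =O[𝓝 0] fun t => t := by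
    have hw : DifferentiableAt ℂ w 0 := by fun_prop
    simpa [hγ0, hw0] using (hγ.prodMk hw).isBigO_sub
  have hprod := hsecond.trans (hΦ.norm_left.mul hk.norm_left)
  refine hprod.congr' ?_ ?_
  · filter_upwards with t
    simp only [Function.comp_apply, hfc', ContinuousLinearMap.id_apply, iterateDisplacement,
      Pi.sub_apply, Function.iterate_succ_apply', Function.iterate_zero_apply, γ, w]
    abel
  · filter_upwards with t
    rw [sub_zero, pow_succ']

theorem eqOn_id_of_fderiv_eq_id {D : Set E} (hD : Bornology.IsBounded D) {f : E → E}
    (hf : DifferentiableOn ℂ f D) (hfD : MapsTo f D D) {c : E} (hfc : f c = c)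
    (hfc' : fderiv ℂ f c = .id ℂ E) {R : ℝ} (hR : ball c R ⊆ D) : EqOn f id (ball c R) := by
  intro z hz
  rcases eq_or_ne z c with rfl | hzc
  · exact hfc
  set v := z - c
  have hv : 0 < ‖v‖ := norm_pos_iff.mpr (sub_ne_zero.mpr hzc)
  obtain ⟨ρ, hvρ, hρR⟩ := exists_between (mem_ball_iff_norm.mp hz)
  set σ := ρ / ‖v‖
  have hσ : 1 < σ := (one_lt_div hv).mpr hvρ
  have hline : MapsTo (fun t : ℂ => c + t • v) (closedBall 0 σ) D := fun t ht => by
    refine hR (mem_ball_iff_norm.mpr ?_)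
    rw [add_sub_cancel_left, norm_smul]
    calc ‖t‖ * ‖v‖ ≤ σ * ‖v‖ := by gcongr; exact mem_closedBall_zero_iff.mp ht
      _ = ρ := div_mul_cancel₀ _ hv.ne'
      _ < R := hρR
  obtain ⟨M, hM⟩ := hD.exists_norm_le
  have hH : ∀ n, DifferentiableOn ℂ (iterateDisplacement f c v n) (closedBall 0 σ) := fun n =>
    ((hf.iterate hfD n).comp (by fun_prop) hline).sub (by fun_prop)
  have hB : ∀ n, ∀ t ∈ sphere (0 : ℂ) σ, ‖iterateDisplacement f c v n t‖ ≤ M + M := by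
    intro n t ht
    have hmem := hline (sphere_subset_closedBall ht)
    exact (norm_sub_le _ _).trans (add_le_add (hM _ (hfD.iterate n hmem)) (hM _ hmem))
  have hD : D ∈ 𝓝 c := mem_of_superset (ball_mem_nhds c (pos_of_mem_ball hz)) hR
  have hzero := eventuallyEq_zero_of_approx_additive (by linarith) hH
    (by ext; simp [iterateDisplacement])
    hB fun n k => le_analyticOrderAt_iterateDisplacement_sub hf hfD hD hfc hfc' v
  have hball := ((hH 1).mono ball_subset_closedBall).analyticOnNhd isOpen_ball
    |>.eqOn_zero_of_preconnected_of_eventuallyEq_zero (convex_ball 0 σ).isPreconnected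
      (mem_ball_self (by linarith)) hzero
  have := hball (show (1 : ℂ) ∈ ball 0 σ by simpa using hσ)
  simpa [iterateDisplacement, v, sub_eq_zero] using this

theorem eqOn_id_of_isPreconnected {D : Set E} (hDo : IsOpen D) (hDc : IsPreconnected D)
    (hDb : Bornology.IsBounded D) {f : E → E} (hf : DifferentiableOn ℂ f D)
    (hfD : MapsTo f D D) {c : E} (hc : c ∈ D) (hfc : f c = c)
    (hfc' : fderiv ℂ f c = .id ℂ E) : EqOn f id D := by
  set U := {z | f =ᶠ[𝓝 z] id}
  have hcU : c ∈ U := by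
    obtain ⟨R, hR, hRD⟩ := Metric.isOpen_iff.mp hDo c hc
    exact eventuallyEq_of_mem (ball_mem_nhds c hR)
      (eqOn_id_of_fderiv_eq_id hDb hf hfD hfc hfc' hRD)
  have hclosure : closure U ∩ D ⊆ U := by
    rintro z ⟨hzU, hzD⟩
    obtain ⟨ε, hε, hεD⟩ := Metric.isOpen_iff.mp hDo z hzD
    obtain ⟨w, hwU, hzw⟩ := Metric.mem_closure_iff.mp hzU (ε / 2) (half_pos hε)
    have hwD : ball w (ε / 2) ⊆ D :=
      (ball_subset_ball' (by rw [dist_comm]; linarith)).trans hεD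
    exact eventuallyEq_of_mem (isOpen_ball.mem_nhds (mem_ball.mpr hzw))
      (eqOn_id_of_fderiv_eq_id hDb hf hfD hwU.eq_of_nhds (by rw [hwU.fderiv_eq, fderiv_id]) hwD)
  intro z hz
  exact EventuallyEq.eq_of_nhds <| hDc.subset_of_closure_inter_subset
    isOpen_setOfPred_eventually_nhds ⟨c, hc, hcU⟩ hclosure hz

end Cartan

theorem cartan_uniqueness_general {d : ℕ} (D : Set (Fin d → ℂ))
    (hD_open : IsOpen D) (hD_conn : IsConnected D) (hD_bdd : Bornology.IsBounded D)
    (f : (Fin d → ℂ) → (Fin d → ℂ))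
    (hf : DifferentiableOn ℂ f D) (hfD : Set.MapsTo f D D)
    (z₀ : Fin d → ℂ) (hz₀ : z₀ ∈ D) (hfix : f z₀ = z₀)
    (hderiv : fderiv ℂ f z₀ = ContinuousLinearMap.id ℂ (Fin d → ℂ)) :
    Set.EqOn f id D :=
  eqOn_id_of_isPreconnected hD_open hD_conn.isPreconnected hD_bdd hf hfD hz₀ hfix hderiv

/-- H. Cartan's uniqueness theorem: an automorphism of a bounded domain fixing a point
with identity derivative there is the identity. -/
theorem cartan_uniqueness {d : ℕ} (D : Set (Fin d → ℂ))
    (hD_open : IsOpen D) (hD_conn : IsConnected D) (hD_bdd : Bornology.IsBounded D)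
    (f g : (Fin d → ℂ) → (Fin d → ℂ))
    (hf : DifferentiableOn ℂ f D) (hfD : Set.MapsTo f D D)
    (hg : DifferentiableOn ℂ g D) (hgD : Set.MapsTo g D D)
    (hgf : ∀ z ∈ D, g (f z) = z) (hfg : ∀ z ∈ D, f (g z) = z)
    (z₀ : Fin d → ℂ) (hz₀ : z₀ ∈ D) (hfix : f z₀ = z₀)
    (hderiv : fderiv ℂ f z₀ = ContinuousLinearMap.id ℂ (Fin d → ℂ)) :
    Set.EqOn f id D :=
  cartan_uniqueness_general D hD_open hD_conn hD_bdd f hf hfD z₀ hz₀ hfix hderiv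
end

section
/- If D is a bounded circular domain in ℂ^d containing 0 (circular means z ∈ D and |λ| = 1 imply λz ∈ D), and F is a biholomorphic automorphism of D with F(0) = 0, then F is the restriction to D of an invertible linear map on ℂ^d. -/
/-!
Cartan's uniqueness theorem: a holomorphic self-map `H` of a bounded domain with `H p = p` and
`H'(p) = id` is the identity. Along a complex line `t ↦ p + t • z`, if `H (p + t • z) - (p + t • z)`
had a nonzero lowest-order term `t ^ k • a`, then the same expression for the `n`-th iterate would
have lowest-order term `t ^ k • n • a`; since all iterates map the domain into itself, Cauchy's
estimates bound `n • a` uniformly in `n`, so `a = 0`.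

For a circular domain, the uniqueness theorem applied to `G ∘ (c⁻¹ • ·) ∘ F ∘ (c • ·)` gives
`F (c • z) = c • F z` for `‖c‖ = 1`. Then `t ↦ F (t • x) - t • F x` vanishes on the unit circle,
so by Cauchy's estimate its derivative `F'(0) x - F x` at `0` vanishes: `F = F'(0)` near `0`, hence
on all of the domain by the identity theorem.
-/

open Set Metric Filter Asymptotics Topology

section Lines

variable {𝕜 E F : Type*} [NontriviallyNormedField 𝕜] [NormedAddCommGroup E] [NormedSpace 𝕜 E]
  [NormedAddCommGroup F] [NormedSpace 𝕜 F]

theorem HasFDerivAt.hasDerivAt_comp_add_smul {f : E → F} {f' : E →L[𝕜] F} {a : E} (v : E)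
    (hf : HasFDerivAt f f' a) : HasDerivAt (fun t : 𝕜 => f (a + t • v)) (f' v) 0 := by
  have hline : HasDerivAt (fun t : 𝕜 => a + t • v) v 0 := by
    simpa using ((hasDerivAt_id (0 : 𝕜)).smul_const v).const_add a
  exact (by simpa using hf : HasFDerivAt f f' (a + (0 : 𝕜) • v)).comp_hasDerivAt 0 hline

theorem DifferentiableOn.comp_add_smul {f : E → F} {U : Set E} (hf : DifferentiableOn 𝕜 f U)
    (a v : E) :
    DifferentiableOn 𝕜 (fun t : 𝕜 => f (a + t • v)) ((fun t : 𝕜 => a + t • v) ⁻¹' U) :=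
  hf.comp (by fun_prop) fun _ ht => ht

theorem HasFDerivAt.comp_eq_id_of_leftInverse {f : E → F} {g : F → E} {f' : E →L[𝕜] F}
    {g' : F →L[𝕜] E} {p : E} (hg : HasFDerivAt g g' (f p)) (hf : HasFDerivAt f f' p)
    (hgf : ∀ᶠ x in 𝓝 p, g (f x) = x) :
    g'.comp f' = ContinuousLinearMap.id 𝕜 E :=
  (hg.comp p hf).unique ((hasFDerivAt_id p).congr_of_eventuallyEq hgf)

theorem isLittleO_sub_pow_smul {f g : 𝕜 → E} {k : ℕ} (hfg : ∀ᶠ t in 𝓝 0, f t = t ^ k • g t)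
    (hg : ContinuousAt g 0) : (fun t => f t - t ^ k • g 0) =o[𝓝 0] (· ^ k) := by
  have hg' : (fun t => g t - g 0) =o[𝓝 0] fun _ => (1 : 𝕜) :=
    (isLittleO_one_iff 𝕜).mpr (by simpa using hg.tendsto.sub_const (g 0))
  refine ((isBigO_refl (fun t : 𝕜 => t ^ k) _).smul_isLittleO hg').congr' ?_
    (Eventually.of_forall fun t => by simp)
  filter_upwards [hfg] with t ht
  rw [ht, smul_sub]

theorem HasStrictFDerivAt.iterate_sub_isLittleO {α : Type*} {H : E → E} {p c : E} {l : Filter α}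
    {γ : α → E} {e : α → 𝕜}
    (hH : HasStrictFDerivAt H (ContinuousLinearMap.id 𝕜 E) p)
    (hγ : Tendsto γ l (𝓝 p)) (he : Tendsto e l (𝓝 0))
    (hc : (fun x => H (γ x) - γ x - e x • c) =o[l] e) (n : ℕ) :
    (fun x => H^[n] (γ x) - γ x - e x • (n • c)) =o[l] e := by
  induction n with
  | zero => simp
  | succ n ih =>
    have hdisp : (fun x => H^[n] (γ x) - γ x) =O[l] e :=
      (ih.isBigO.add (isBigO_of_le' (c := ‖n • c‖) l fun x => by rw [norm_smul, mul_comm]))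
        |>.congr_left fun x => sub_add_cancel _ _
    have hlim : Tendsto (fun x => (H^[n] (γ x), γ x)) l (𝓝 (p, p)) := by
      refine Tendsto.prodMk_nhds ?_ hγ
      simpa using (hdisp.trans_tendsto he).add hγ
    have hstep := (hH.isLittleO.comp_tendsto hlim).trans_isBigO hdisp
    refine ((hstep.add hc).add ih).congr_left fun x => ?_
    simp only [Function.comp_apply, ContinuousLinearMap.id_apply, Function.iterate_succ_apply',
      succ_nsmul, smul_add]
    abel

end Lines

section OneVariable

variable {E : Type*} [NormedAddCommGroup E] [NormedSpace ℂ E] [CompleteSpace E]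

theorem exists_eq_pow_smul_of_isLittleO {U : Set ℂ} {f : ℂ → E} {a : E} {k : ℕ}
    (hU : U ∈ 𝓝 0) (hf : DifferentiableOn ℂ f U)
    (ha : (fun z => f z - z ^ k • a) =o[𝓝[≠] 0] (· ^ k)) :
    ∃ g : ℂ → E, DifferentiableOn ℂ g U ∧ g 0 = a ∧ ∀ z ∈ U, f z = z ^ k • g z := by
  have hcont : ContinuousAt f 0 := (hf.differentiableAt hU).continuousAt
  induction k generalizing f with
  | zero =>
    refine ⟨f, hf, ?_, fun z _ => by simp⟩
    have hlim : Tendsto (fun z => f z - a) (𝓝[≠] 0) (𝓝 0) :=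
      (isLittleO_one_iff ℂ).mp (by simpa using ha)
    exact sub_eq_zero.mp (tendsto_nhds_unique
      ((hcont.tendsto.mono_left nhdsWithin_le_nhds).sub_const a) hlim)
  | succ k ih =>
    have hpow : Tendsto (fun z : ℂ => z ^ (k + 1)) (𝓝[≠] 0) (𝓝 0) := by
      simpa using ((continuous_pow (k + 1)).tendsto (0 : ℂ)).mono_left nhdsWithin_le_nhds
    have hf0 : f 0 = 0 := by
      have hlim : Tendsto f (𝓝[≠] 0) (𝓝 0) := by
        simpa using (ha.trans_tendsto hpow).add (hpow.smul_const a)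
      exact tendsto_nhds_unique (hcont.tendsto.mono_left nhdsWithin_le_nhds) hlim
    have hslope : ∀ z, f z = z • dslope f 0 z := fun z => by
      simpa [hf0] using (sub_smul_dslope f 0 z).symm
    have ha' : (fun z => dslope f 0 z - z ^ k • a) =o[𝓝[≠] 0] (· ^ k) := by
      refine ((isBigO_refl (fun z : ℂ => z⁻¹) _).smul_isLittleO ha).congr' ?_ ?_ <;>
        filter_upwards [self_mem_nhdsWithin] with z (hz : z ≠ 0)
      · rw [hslope z, smul_sub, inv_smul_smul₀ hz, smul_smul, pow_succ, mul_comm,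
          mul_inv_cancel_right₀ hz]
      · rw [smul_eq_mul, pow_succ, mul_comm, mul_inv_cancel_right₀ hz]
    obtain ⟨g, hg, hg0, hfg⟩ := ih ((Complex.differentiableOn_dslope hU).mpr hf) ha'
      ((Complex.differentiableOn_dslope hU).mpr hf |>.differentiableAt hU).continuousAt
    refine ⟨g, hg, hg0, fun z hz => ?_⟩
    rw [hslope z, hfg z hz, smul_smul, pow_succ']

theorem norm_le_of_isLittleO_sub_pow_smul {f : ℂ → E} {a : E} {k : ℕ} {r M : ℝ} (hr : 0 < r)
    (hf : DifferentiableOn ℂ f (closedBall 0 r)) (hM : ∀ z ∈ sphere (0 : ℂ) r, ‖f z‖ ≤ M)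
    (ha : (fun z => f z - z ^ k • a) =o[𝓝[≠] 0] (· ^ k)) :
    ‖a‖ ≤ M / r ^ k := by
  obtain ⟨g, hg, rfl, hfg⟩ := exists_eq_pow_smul_of_isLittleO (closedBall_mem_nhds 0 hr) hf ha
  refine Complex.norm_le_of_forall_mem_frontier_norm_le isBounded_ball
    (hg.diffContOnCl_ball subset_rfl) (fun z hz => ?_) (subset_closure (mem_ball_self hr))
  rw [frontier_ball 0 hr.ne'] at hz
  have hzr : ‖z‖ = r := by simpa using hz
  rw [le_div_iff₀ (by positivity), mul_comm, ← hzr, ← norm_pow, ← norm_smul,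
    ← hfg z (sphere_subset_closedBall hz)]
  exact hM z hz

end OneVariable

section Holomorphic

variable {E F : Type*} [NormedAddCommGroup E] [NormedSpace ℂ E] [NormedAddCommGroup F]
  [NormedSpace ℂ F]

theorem DifferentiableOn.continuousAt_fderiv [ProperSpace E] {f : E → F} {U : Set E} {x : E}
    (hf : DifferentiableOn ℂ f U) (hU : U ∈ 𝓝 x) : ContinuousAt (fderiv ℂ f) x := by
  obtain ⟨s, hs, hsU⟩ : ∃ s > 0, closedBall x (2 * s) ⊆ U := by
    obtain ⟨t, ht, htU⟩ := nhds_basis_closedBall.mem_iff.mp hU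
    exact ⟨t / 2, half_pos ht, by rwa [mul_div_cancel₀ t two_ne_zero]⟩
  rw [Metric.continuousAt_iff]
  intro ε hε
  obtain ⟨δ, hδ, hfδ⟩ := Metric.uniformContinuousOn_iff.mp
    ((isCompact_closedBall x (2 * s)).uniformContinuousOn_of_continuous
      (hf.continuousOn.mono hsU)) (ε * s / 2) (by positivity)
  refine ⟨min δ s, lt_min hδ hs, fun ξ hξ => ?_⟩
  rw [dist_eq_norm]
  refine (ContinuousLinearMap.opNorm_le_of_unit_norm (half_pos hε).le fun v hv => ?_).trans_lt
    (half_lt_self hε)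
  -- Cauchy's estimate for the derivative at `0` of `t ↦ f (ξ + t • v) - f (x + t • v)`,
  -- which uniform continuity of `f` makes small on the circle of radius `s`
  have hmem : ∀ y ∈ ball x (min δ s), ∀ t ∈ closedBall (0 : ℂ) s,
      y + t • v ∈ closedBall x (2 * s) := by
    intro y hy t ht
    rw [mem_ball] at hy
    rw [mem_closedBall, dist_eq_norm, add_sub_right_comm, two_mul]
    refine (norm_add_le _ _).trans (add_le_add ?_ ?_)
    · rw [← dist_eq_norm]; exact hy.le.trans (min_le_right _ _)
    · simpa [norm_smul, hv] using ht
  have hx : x ∈ ball x (min δ s) := mem_ball_self (lt_min hδ hs)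
  have hslice : ∀ y ∈ ball x (min δ s),
      DifferentiableOn ℂ (fun t : ℂ => f (y + t • v)) (closedBall 0 s) := fun y hy =>
    (hf.comp_add_smul y v).mono fun t ht => hsU (hmem y hy t ht)
  have hderiv : HasDerivAt (fun t : ℂ => f (ξ + t • v) - f (x + t • v))
      ((fderiv ℂ f ξ - fderiv ℂ f x) v) 0 := by
    have hdiff : ∀ y ∈ ball x (min δ s), HasFDerivAt f (fderiv ℂ f y) y := fun y hy =>
      have hy' : y ∈ ball x (2 * s) :=
        mem_ball.mpr <| by linarith [mem_ball.mp hy, min_le_right δ s]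
      (hf.differentiableAt (mem_of_superset (isOpen_ball.mem_nhds hy')
        (ball_subset_closedBall.trans hsU))).hasFDerivAt
    exact ((hdiff ξ hξ).hasDerivAt_comp_add_smul v).sub ((hdiff x hx).hasDerivAt_comp_add_smul v)
  have hg : DiffContOnCl ℂ (fun t : ℂ => f (ξ + t • v) - f (x + t • v)) (ball 0 s) :=
    ((hslice ξ hξ).sub (hslice x hx)).diffContOnCl_ball subset_rfl
  have hbound := Complex.norm_deriv_le_of_forall_mem_sphere_norm_le hs hg (C := ε * s / 2)
    fun t ht => by
      rw [← dist_eq_norm]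
      refine (hfδ _ (hmem ξ hξ t (sphere_subset_closedBall ht)) _
        (hmem x hx t (sphere_subset_closedBall ht)) ?_).le
      rw [dist_add_right]
      exact hξ.trans_le (min_le_left _ _)
  rwa [hderiv.deriv, mul_div_right_comm, mul_div_cancel_right₀ _ hs.ne'] at hbound

theorem DifferentiableOn.hasStrictFDerivAt [ProperSpace E] {f : E → F} {U : Set E} {x : E}
    (hf : DifferentiableOn ℂ f U) (hU : IsOpen U) (hx : x ∈ U) :
    HasStrictFDerivAt f (fderiv ℂ f x) x :=
  hasStrictFDerivAt_of_hasFDerivAt_of_continuousAt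
    (eventually_of_mem (hU.mem_nhds hx) fun _ hy =>
      (hf.differentiableAt (hU.mem_nhds hy)).hasFDerivAt)
    (hf.continuousAt_fderiv (hU.mem_nhds hx))

theorem DifferentiableOn.eqOn_zero_of_convex [CompleteSpace F] {f : E → F} {B : Set E}
    (hf : DifferentiableOn ℂ f B) (hBc : Convex ℝ B) (hBo : IsOpen B) {w : E} (hw : w ∈ B)
    (hfw : f =ᶠ[𝓝 w] 0) : EqOn f 0 B := by
  intro y hy
  set S := (fun t : ℂ => w + t • (y - w)) ⁻¹' B
  have hSc : Convex ℝ S := (hBc.translate_preimage_right w).is_linear_preimage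
    ⟨fun a b => add_smul a b _, fun c a => smul_assoc c a _⟩
  have hline : Tendsto (fun t : ℂ => w + t • (y - w)) (𝓝 0) (𝓝 w) := by
    simpa using ((continuous_id.smul continuous_const).const_add w).tendsto (0 : ℂ)
  have hzero := ((hf.comp_add_smul w (y - w)).analyticOnNhd (hBo.preimage (by fun_prop)))
    |>.eqOn_zero_of_preconnected_of_eventuallyEq_zero hSc.isPreconnected
      (show (0 : ℂ) ∈ S by simpa [S] using hw) (hline.eventually hfw)
    (show (1 : ℂ) ∈ S by simpa [S] using hy)
  simpa using hzero

theorem DifferentiableOn.eqOn_zero_of_isPreconnected [CompleteSpace F] {f : E → F} {D : Set E}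
    (hf : DifferentiableOn ℂ f D) (hDo : IsOpen D) (hDc : IsPreconnected D) {w : E}
    (hw : w ∈ D) (hfw : f =ᶠ[𝓝 w] 0) : EqOn f 0 D := by
  have hsub : D ⊆ {x | f =ᶠ[𝓝 x] 0} := by
    refine hDc.subset_of_closure_inter_subset isOpen_setOfPred_eventually_nhds ⟨w, hw, hfw⟩ ?_
    rintro x ⟨hx, hxD⟩
    obtain ⟨ε, hε, hεD⟩ := Metric.isOpen_iff.mp hDo x hxD
    obtain ⟨y, hy, hfy⟩ := mem_closure_iff.mp hx _ isOpen_ball (mem_ball_self hε)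
    exact eventually_of_mem (ball_mem_nhds x hε)
      ((hf.mono hεD).eqOn_zero_of_convex (convex_ball x ε) isOpen_ball hy hfy)
  exact fun x hx => (hsub hx).self_of_nhds

theorem HasStrictFDerivAt.apply_add_eq_of_bounded_iterates [CompleteSpace E] {H : E → E}
    {p z : E} {ρ M : ℝ} (hH : HasStrictFDerivAt H (ContinuousLinearMap.id ℂ E) p) (hp : H p = p)
    (hρ : 1 < ρ)
    (hdiff : ∀ n, DifferentiableOn ℂ (fun t : ℂ => H^[n] (p + t • z)) (ball 0 ρ))
    (hbdd : ∀ n, ∀ t ∈ ball (0 : ℂ) ρ, ‖H^[n] (p + t • z) - (p + t • z)‖ ≤ M) :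
    H (p + z) = p + z := by
  set φ : ℕ → ℂ → E := fun n t => H^[n] (p + t • z) - (p + t • z)
  have hφd : ∀ n, DifferentiableOn ℂ (φ n) (ball 0 ρ) := fun n =>
    (hdiff n).sub (by fun_prop)
  have h0ρ : (0 : ℂ) ∈ ball 0 ρ := mem_ball_self (by linarith)
  have hφ0 : φ 1 =ᶠ[𝓝 0] 0 := by
    -- otherwise `H^[n]` multiplies the lowest-order term by `n`, against Cauchy's estimate
    by_contra hne
    obtain ⟨k, g, hg, hg0, hφg⟩ := ((hφd 1).analyticAt (isOpen_ball.mem_nhds h0ρ))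
      |>.exists_eventuallyEq_pow_smul_nonzero_iff.mpr hne
    have hk : k ≠ 0 := by
      rintro rfl
      exact hg0 (by simpa [φ, hp] using hφg.self_of_nhds.symm)
    have hlead := isLittleO_sub_pow_smul (by simpa using hφg) hg.continuousAt
    have hiter := hH.iterate_sub_isLittleO (γ := fun t : ℂ => p + t • z)
      (by simpa using ((tendsto_id (x := 𝓝 (0 : ℂ))).smul_const z).const_add p)
      (by simpa [hk] using (continuous_pow k).tendsto (0 : ℂ)) hlead
    have hcoeff : ∀ n : ℕ, (n : ℝ) * ‖g 0‖ ≤ M := fun n => by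
      have := norm_le_of_isLittleO_sub_pow_smul one_pos
        ((hφd n).mono (closedBall_subset_ball hρ)) (fun t ht => hbdd n t ?_)
        ((hiter n).mono nhdsWithin_le_nhds)
      · rwa [RCLike.norm_nsmul ℂ, nsmul_eq_mul, one_pow, div_one] at this
      · exact mem_ball_zero_iff.mpr ((mem_sphere_zero_iff_norm.mp ht).trans_lt hρ)
    obtain ⟨n, hn⟩ := exists_nat_gt (M / ‖g 0‖)
    rw [div_lt_iff₀ (norm_pos_iff.mpr hg0)] at hn
    linarith [hcoeff n]
  simpa [φ, sub_eq_zero] using ((hφd 1).analyticOnNhd isOpen_ball)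
    |>.eqOn_zero_of_preconnected_of_eventuallyEq_zero (convex_ball 0 ρ).isPreconnected h0ρ hφ0
      (show (1 : ℂ) ∈ ball 0 ρ by simpa using hρ)

theorem eqOn_id_of_hasFDerivAt_id [ProperSpace E] {D : Set E} (hDo : IsOpen D)
    (hDc : IsPreconnected D) (hDb : Bornology.IsBounded D) {H : E → E} {p : E} (hp : p ∈ D)
    (hH : DifferentiableOn ℂ H D) (hHD : MapsTo H D D) (hHp : H p = p)
    (hH' : HasFDerivAt H (ContinuousLinearMap.id ℂ E) p) : EqOn H id D := by
  have hstrict : HasStrictFDerivAt H (ContinuousLinearMap.id ℂ E) p :=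
    hH'.fderiv ▸ hH.hasStrictFDerivAt hDo hp
  obtain ⟨r, hr, hrD⟩ := Metric.isOpen_iff.mp hDo p hp
  have hnear : ∀ z ∈ ball (0 : E) (r / 2), H (p + z) = p + z := by
    intro z hz
    have hline : ∀ t ∈ ball (0 : ℂ) 2, p + t • z ∈ D := fun t ht => hrD <| by
      rw [mem_ball_zero_iff] at ht hz
      rw [mem_ball_iff_norm, add_sub_cancel_left, norm_smul]
      nlinarith [norm_nonneg t, norm_nonneg z]
    exact hstrict.apply_add_eq_of_bounded_iterates hHp one_lt_two
      (fun n => ((hH.iterate hHD n).comp_add_smul p z).mono hline)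
      (fun n t ht => dist_eq_norm (H^[n] _) _ ▸
        dist_le_diam_of_mem hDb (hHD.iterate n (hline t ht)) (hline t ht))
  have hev : (fun x => H x - x) =ᶠ[𝓝 p] 0 := by
    filter_upwards [ball_mem_nhds p (half_pos hr)] with x hx
    simpa [sub_eq_zero] using hnear (x - p) (by simpa [← dist_eq_norm] using hx)
  intro x hx
  exact sub_eq_zero.mp ((hH.sub differentiableOn_id).eqOn_zero_of_isPreconnected hDo hDc hp hev hx)

theorem map_circle_smul_of_circular [ProperSpace E] {D : Set E} (hDo : IsOpen D)
    (hDc : IsPreconnected D) (hDb : Bornology.IsBounded D) (h0 : (0 : E) ∈ D)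
    (hcirc : ∀ c : ℂ, ‖c‖ = 1 → ∀ z ∈ D, c • z ∈ D) {F G : E → E} {L M : E →L[ℂ] E}
    (hF : DifferentiableOn ℂ F D) (hFD : MapsTo F D D) (hG : DifferentiableOn ℂ G D)
    (hGD : MapsTo G D D) (hFG : ∀ z ∈ D, F (G z) = z) (hF0 : F 0 = 0) (hG0 : G 0 = 0)
    (hL : HasFDerivAt F L 0) (hM : HasFDerivAt G M 0) (hML : M.comp L = ContinuousLinearMap.id ℂ E)
    {c : ℂ} (hc : ‖c‖ = 1) {z : E} (hz : z ∈ D) : F (c • z) = c • F z := by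
  have hc0 : c ≠ 0 := norm_ne_zero_iff.mp (hc.trans_ne one_ne_zero)
  have hcD : MapsTo (c • ·) D D := hcirc c hc
  have hcD' : MapsTo (c⁻¹ • ·) D D := hcirc c⁻¹ (by rw [norm_inv, hc, inv_one])
  have hrot : EqOn (fun w => G (c⁻¹ • F (c • w))) id D := by
    refine eqOn_id_of_hasFDerivAt_id hDo hDc hDb h0
      (hG.comp ((hF.comp (differentiableOn_id.const_smul c) hcD).const_smul c⁻¹)
        (hcD'.comp (hFD.comp hcD)))
      (hGD.comp (hcD'.comp (hFD.comp hcD))) (by simp [hF0, hG0]) ?_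
    have hL' : HasFDerivAt F L (c • (0 : E)) := by rwa [smul_zero]
    have hM' : HasFDerivAt G M (c⁻¹ • F (c • (0 : E))) := by rwa [smul_zero, hF0, smul_zero]
    refine (hM'.comp 0 ((hL'.comp 0 ((hasFDerivAt_id 0).const_smul c)).const_smul c⁻¹))
      |>.congr_fderiv ?_
    ext w
    simpa [inv_smul_smul₀ hc0] using DFunLike.congr_fun hML w
  have hFz := congrArg F (hrot hz)
  rw [id, hFG _ (hcD' (hFD (hcD hz)))] at hFz
  rw [← hFz, smul_inv_smul₀ hc0]

theorem eqOn_fderiv_of_map_circle_smul {f : E → F} {r : ℝ} (hf : DifferentiableOn ℂ f (ball 0 r))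
    (hcirc : ∀ c : ℂ, ‖c‖ = 1 → ∀ x ∈ ball (0 : E) r, f (c • x) = c • f x) :
    EqOn f (fderiv ℂ f 0) (ball 0 r) := by
  intro x hx
  have hr : 0 < r := pos_of_mem_ball hx
  have hline : ∀ t ∈ closedBall (0 : ℂ) 1, 0 + t • x ∈ ball (0 : E) r := fun t ht => by
    rw [mem_closedBall_zero_iff] at ht
    rw [zero_add, mem_ball_zero_iff, norm_smul]
    exact (mul_le_of_le_one_left (norm_nonneg x) ht).trans_lt (mem_ball_zero_iff.mp hx)
  -- Cauchy's estimate: `t ↦ f (t • x) - t • f x` vanishes on the unit circle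
  have hh : DiffContOnCl ℂ (fun t : ℂ => f (0 + t • x) - t • f x) (ball 0 1) :=
    (((hf.comp_add_smul 0 x).mono hline).sub (by fun_prop)).diffContOnCl_ball subset_rfl
  have hderiv : HasDerivAt (fun t : ℂ => f (0 + t • x) - t • f x) (fderiv ℂ f 0 x - f x) 0 :=
    ((hf.differentiableAt (isOpen_ball.mem_nhds (mem_ball_self hr))).hasFDerivAt
      |>.hasDerivAt_comp_add_smul x).sub (by simpa using (hasDerivAt_id (0 : ℂ)).smul_const (f x))
  have hbound := Complex.norm_deriv_le_of_forall_mem_sphere_norm_le one_pos hh (C := 0)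
    fun t ht => by
      rw [zero_add, hcirc t (by simpa using ht) x hx, sub_self, norm_zero]
  rw [hderiv.deriv, zero_div, norm_le_zero_iff, sub_eq_zero] at hbound
  exact hbound.symm

end Holomorphic

/-- H. Cartan: an automorphism of a bounded circular domain containing 0 which fixes 0
is the restriction of an invertible linear map. -/
theorem cartan_circular_linear {d : ℕ} (D : Set (Fin d → ℂ))
    (hD_open : IsOpen D) (hD_conn : IsConnected D) (hD_bdd : Bornology.IsBounded D)
    (h0 : (0 : Fin d → ℂ) ∈ D)
    (hcirc : ∀ lam : ℂ, ‖lam‖ = 1 → ∀ z ∈ D, lam • z ∈ D)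
    (F G : (Fin d → ℂ) → (Fin d → ℂ))
    (hF : DifferentiableOn ℂ F D) (hFD : Set.MapsTo F D D)
    (hG : DifferentiableOn ℂ G D) (hGD : Set.MapsTo G D D)
    (hGF : ∀ z ∈ D, G (F z) = z) (hFG : ∀ z ∈ D, F (G z) = z)
    (hfix : F 0 = 0) :
    ∃ L : (Fin d → ℂ) ≃ₗ[ℂ] (Fin d → ℂ), Set.EqOn F (⇑L) D := by
  have hG0 : G 0 = 0 := by simpa [hfix] using hGF 0 h0
  have hD0 : D ∈ 𝓝 0 := hD_open.mem_nhds h0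
  have hL := (hF.differentiableAt hD0).hasFDerivAt
  have hM := (hG.differentiableAt hD0).hasFDerivAt
  have hML := (show HasFDerivAt G (fderiv ℂ G 0) (F 0) by rwa [hfix]).comp_eq_id_of_leftInverse hL
    (eventually_of_mem hD0 hGF)
  have hLM := (show HasFDerivAt F (fderiv ℂ F 0) (G 0) by rwa [hG0]).comp_eq_id_of_leftInverse hM
    (eventually_of_mem hD0 hFG)
  obtain ⟨r, hr, hrD⟩ := Metric.isOpen_iff.mp hD_open 0 h0
  have hlin : EqOn F (fderiv ℂ F 0) (ball 0 r) := eqOn_fderiv_of_map_circle_smul (hF.mono hrD)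
    fun c hc x hx => map_circle_smul_of_circular hD_open hD_conn.isPreconnected hD_bdd h0 hcirc
      hF hFD hG hGD hFG hfix hG0 hL hM hML hc (hrD hx)
  refine ⟨(ContinuousLinearEquiv.equivOfInverse _ _ (ContinuousLinearMap.ext_iff.mp hML)
    (ContinuousLinearMap.ext_iff.mp hLM)).toLinearEquiv, fun x hx => sub_eq_zero.mp ?_⟩
  refine (hF.sub (fderiv ℂ F 0).differentiableOn).eqOn_zero_of_isPreconnected hD_open
    hD_conn.isPreconnected h0 ?_ hx
  filter_upwards [ball_mem_nhds 0 hr] with y hy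
  simpa [sub_eq_zero] using hlin hy
end

section
/- For any n × n complex matrix Z with operator norm ‖Z‖ < 1 and any a ∈ ℂ with |a| < 1, the matrix Möbius transform m(Z) = (Z - a·I)(I - conj(a)·Z)⁻¹ satisfies ‖m(Z)‖ < 1. -/
/-!
Write `x = y - conj a • Z y`, so that the Möbius transform sends `x` to `Z y - a • y`.
Expanding both norms gives `‖x‖² - ‖Z y - a • y‖² = (1 - ‖a‖²)(‖y‖² - ‖Z y‖²)`, which is at
least `(1 - ‖a‖²)(1 - ‖Z‖²)‖y‖²`; as `‖x‖ ≤ 2‖y‖`, the transform shrinks every vector by a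
uniform factor `< 1`.
-/

open scoped InnerProductSpace ComplexConjugate

section InnerProduct

variable {𝕜 E : Type*} [RCLike 𝕜] [NormedAddCommGroup E] [InnerProductSpace 𝕜 E]

theorem norm_sub_conj_smul_sq (a : 𝕜) (y w : E) :
    ‖y - conj a • w‖ ^ 2 = ‖w - a • y‖ ^ 2 + (1 - ‖a‖ ^ 2) * (‖y‖ ^ 2 - ‖w‖ ^ 2) := by
  have hcross : RCLike.re (conj a * ⟪y, w⟫_𝕜) = RCLike.re (a * ⟪w, y⟫_𝕜) := by
    rw [← inner_conj_symm w y, ← RCLike.conj_re, map_mul, RCLike.conj_conj]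
  rw [@norm_sub_sq 𝕜, @norm_sub_sq 𝕜, inner_smul_right, inner_smul_right, norm_smul, norm_smul,
    RCLike.norm_conj, hcross]
  ring

theorem ContinuousLinearMap.norm_apply_sub_smul_le (T : E →L[𝕜] E) (hT : ‖T‖ ≤ 1) {a : 𝕜}
    (ha : ‖a‖ ≤ 1) (y : E) :
    ‖T y - a • y‖ ≤
      √(1 - (1 - ‖a‖ ^ 2) * (1 - ‖T‖ ^ 2) / 4) * ‖y - conj a • T y‖ := by
  set x := y - conj a • T y
  have hTy : ‖T y‖ ≤ ‖T‖ * ‖y‖ := T.le_opNorm y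
  have hx : ‖x‖ ≤ 2 * ‖y‖ :=
    calc ‖x‖ ≤ ‖y‖ + ‖a‖ * ‖T y‖ := by
          simpa only [norm_smul, RCLike.norm_conj] using norm_sub_le y (conj a • T y)
      _ ≤ 2 * ‖y‖ := by nlinarith [norm_nonneg a, norm_nonneg (T y), norm_nonneg T, norm_nonneg y]
  have hsq : ‖T y - a • y‖ ^ 2 ≤ (1 - (1 - ‖a‖ ^ 2) * (1 - ‖T‖ ^ 2) / 4) * ‖x‖ ^ 2 := by
    have key := norm_sub_conj_smul_sq a y (T y)
    have h1 : 0 ≤ 1 - ‖a‖ ^ 2 := by nlinarith [norm_nonneg a]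
    have h2 : 0 ≤ 1 - ‖T‖ ^ 2 := by nlinarith [norm_nonneg T]
    have hTy2 : ‖T y‖ ^ 2 ≤ ‖T‖ ^ 2 * ‖y‖ ^ 2 := by
      rw [← mul_pow]; exact pow_le_pow_left₀ (norm_nonneg _) hTy 2
    have hx2 : ‖x‖ ^ 2 ≤ 4 * ‖y‖ ^ 2 := by nlinarith [norm_nonneg x]
    nlinarith [mul_le_mul_of_nonneg_left hx2 (mul_nonneg h1 h2),
      mul_le_mul_of_nonneg_left hTy2 h1]
  rw [← Real.sqrt_sq (norm_nonneg x), ← Real.sqrt_mul' _ (sq_nonneg _)]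
  exact Real.le_sqrt_of_sq_le hsq

theorem ContinuousLinearMap.norm_mobius_mul_lt_one (T B : E →L[𝕜] E) (hT : ‖T‖ < 1) {a : 𝕜}
    (ha : ‖a‖ < 1) (hB : (1 - conj a • T) * B = 1) :
    ‖(T - a • 1) * B‖ < 1 := by
  have hc : √(1 - (1 - ‖a‖ ^ 2) * (1 - ‖T‖ ^ 2) / 4) < 1 := by
    have : 0 < (1 - ‖a‖ ^ 2) * (1 - ‖T‖ ^ 2) := by
      apply mul_pos <;> nlinarith [norm_nonneg a, norm_nonneg T]
    rw [Real.sqrt_lt' one_pos]; linarith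
  refine lt_of_le_of_lt (opNorm_le_bound _ (Real.sqrt_nonneg _) fun x => ?_) hc
  have hBx : B x - conj a • T (B x) = x := DFunLike.congr_fun hB x
  have hMx : ((T - a • 1) * B) x = T (B x) - a • B x := rfl
  simpa only [hMx, hBx] using T.norm_apply_sub_smul_le hT.le ha.le (B x)

end InnerProduct

open scoped Matrix.Norms.L2Operator
open Matrix

/-- The matrix Möbius transform `(Z - aI)(I - conj a · Z)⁻¹` maps the matrix unit ball
into itself (operator norm). -/
theorem mobius_matrix_maps_ball {n : ℕ} (Z : Matrix (Fin n) (Fin n) ℂ) (hZ : ‖Z‖ < 1)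
    (a : ℂ) (ha : ‖a‖ < 1) :
    ‖(Z - a • 1) * (1 - (starRingEnd ℂ) a • Z)⁻¹‖ < 1 := by
  have hunit : IsUnit (1 - conj a • Z) :=
    isUnit_one_sub_of_norm_lt_one (by rw [norm_smul, RCLike.norm_conj]; nlinarith [norm_nonneg Z])
  have hinv := mul_nonsing_inv _ ((isUnit_iff_isUnit_det _).mp hunit)
  set φ := toEuclideanCLM (n := Fin n) (𝕜 := ℂ)
  rw [cstar_norm_def] at hZ ⊢
  rw [map_mul, map_sub, map_smul, map_one]
  refine (φ Z).norm_mobius_mul_lt_one _ hZ ha ?_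
  rw [← map_one φ, ← map_smul, ← map_sub, ← map_mul, hinv]
end

section
/- For a ∈ ℂ with |a| < 1 and Z ∈ Mₙ(ℂ) with ‖Z‖ < 1, the matrix Möbius map H_a(Z) = (Z + a·I)(I + conj(a)·Z)⁻¹ satisfies H_{-a}(H_a(Z)) = Z. -/
open scoped Matrix.Norms.L2Operator
open Matrix

/-- The scalar matrix Möbius map `H_a(Z) = (Z + aI)(I + conj a · Z)⁻¹`. -/
noncomputable def mobiusH {n : ℕ} (a : ℂ) (Z : Matrix (Fin n) (Fin n) ℂ) :
    Matrix (Fin n) (Fin n) ℂ :=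
  (Z + a • 1) * (1 + (starRingEnd ℂ) a • Z)⁻¹

/-- `H_{-a} ∘ H_a` is the identity on the matrix unit ball. -/
theorem mobiusH_neg_comp {n : ℕ} (a : ℂ) (ha : ‖a‖ < 1)
    (Z : Matrix (Fin n) (Fin n) ℂ) (hZ : ‖Z‖ < 1) :
    mobiusH (-a) (mobiusH a Z) = Z := by
  set c : ℂ := (starRingEnd ℂ) a with hc
  have hca : ‖c‖ = ‖a‖ := RCLike.norm_conj a
  set B : Matrix (Fin n) (Fin n) ℂ := 1 + c • Z with hBdef
  have hnorm : ‖-(c • Z)‖ < 1 := by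
    rw [norm_neg, norm_smul, hca]
    calc ‖a‖ * ‖Z‖ ≤ 1 * ‖Z‖ := by
          exact mul_le_mul_of_nonneg_right ha.le (norm_nonneg _)
      _ = ‖Z‖ := one_mul _
      _ < 1 := hZ
  have hB : IsUnit B := by
    refine ⟨Units.oneSub (-(c • Z)) hnorm, ?_⟩
    simp [hBdef, sub_neg_eq_add]
  have hBdet : IsUnit B.det := (Matrix.isUnit_iff_isUnit_det B).mp hB
  have hBB : B * B⁻¹ = 1 := Matrix.mul_nonsing_inv B hBdet
  have hBB' : B⁻¹ * B = 1 := Matrix.nonsing_inv_mul B hBdet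
  have hs : (1 : ℂ) - a * c ≠ 0 := by
    intro h
    have : a * c = 1 := by linear_combination -h
    have h1 : ‖a * c‖ = 1 := by rw [this, norm_one]
    rw [norm_mul, hca] at h1
    nlinarith [norm_nonneg a]
  set W : Matrix (Fin n) (Fin n) ℂ := (Z + a • 1) * B⁻¹ with hW
  have h1 : W + (-a) • 1 = ((1 - a * c) • Z) * B⁻¹ := by
    have : W + (-a) • 1 = (Z + a • 1) * B⁻¹ + (-a) • (B * B⁻¹) := by
      rw [hBB]
    rw [this, ← smul_mul_assoc, ← add_mul]
    congr 1
    rw [hBdef]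
    module
  have h2 : 1 + (starRingEnd ℂ) (-a) • W = ((1 - a * c) • (1 : Matrix (Fin n) (Fin n) ℂ)) * B⁻¹ := by
    have : (1 : Matrix (Fin n) (Fin n) ℂ) + (starRingEnd ℂ) (-a) • W
        = B * B⁻¹ + (-c) • ((Z + a • 1) * B⁻¹) := by
      rw [hBB]; simp [hW, hc, map_neg]
    rw [this, ← smul_mul_assoc, ← add_mul]
    congr 1
    rw [hBdef]
    module
  have hinv : (((1 - a * c) • (1 : Matrix (Fin n) (Fin n) ℂ)) * B⁻¹)⁻¹
      = (1 - a * c)⁻¹ • B := by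
    apply Matrix.inv_eq_right_inv
    rw [smul_mul_assoc, one_mul, smul_mul_assoc, mul_smul_comm, hBB', smul_smul,
      mul_inv_cancel₀ hs, one_smul]
  show (W + (-a) • 1) * (1 + (starRingEnd ℂ) (-a) • W)⁻¹ = Z
  rw [h1, h2, hinv, smul_mul_assoc, smul_mul_assoc, mul_smul_comm, Matrix.mul_assoc, hBB',
    Matrix.mul_one, smul_smul, mul_inv_cancel₀ hs, one_smul]
end

section
/- Let A, Z, W be p × q complex matrices with ‖A‖ < 1, ‖Z‖ < 1, ‖W‖ < 1, and define H_A(x) = (I_p - AA*)^{-1/2}(x + A)(I_q + A*x)⁻¹(I_q - A*A)^{1/2}. Then I_q - H_A(W)* H_A(Z) = (I_q - A*A)^{1/2}(I_q + W*A)⁻¹(I_q - W*Z)(I_q + A*Z)⁻¹(I_q - A*A)^{1/2}. -/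
/-! Write `P = I - AA*`, `Q = I - A*A`. The push-through identity `A Q⁻¹ = P⁻¹ A` gives the purely
algebraic identity `(I + W*A) Q⁻¹ (I + A*Z) - (W* + A*) P⁻¹ (Z + A) = I - W*Z`. Conjugating it by
`Q^{1/2} (I + W*A)⁻¹ · (I + A*Z)⁻¹ Q^{1/2}` turns the first term into `Q^{1/2} Q⁻¹ Q^{1/2} = I` and,
since `P^{-1/2}` is Hermitian with square `P⁻¹`, the second into `H_A(W)* H_A(Z)`. -/
open scoped Matrix.Norms.L2Operator ComplexOrder
open Matrix

/-- The positive semidefinite square root of a positive semidefinite matrix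
(the definition of `Matrix.PosSemidef.sqrt` in the older Mathlib, since removed). -/
noncomputable def Matrix.PosSemidef.sqrt {n : Type*} {𝕜 : Type*} [Fintype n] [RCLike 𝕜]
    [DecidableEq n] {A : Matrix n n 𝕜} (hA : A.PosSemidef) : Matrix n n 𝕜 :=
  hA.1.eigenvectorUnitary.1 * diagonal ((↑) ∘ (√·) ∘ hA.1.eigenvalues) *
  (star hA.1.eigenvectorUnitary : Matrix n n 𝕜)

/-- The nc-ball automorphism `H_A(Z) = (I-AA*)^{-1/2}(Z+A)(I+A*Z)⁻¹(I-A*A)^{1/2}`,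
written using the positive semidefinite square roots of `I - AA*` and `I - A*A`. -/
noncomputable def ballMobius {p q : ℕ} (A : Matrix (Fin p) (Fin q) ℂ)
    (hP : (1 - A * Aᴴ).PosSemidef) (hQ : (1 - Aᴴ * A).PosSemidef)
    (Z : Matrix (Fin p) (Fin q) ℂ) : Matrix (Fin p) (Fin q) ℂ :=
  hP.sqrt⁻¹ * (Z + A) * (1 + Aᴴ * Z)⁻¹ * hQ.sqrt

namespace Matrix

variable {m n α : Type*} [Fintype m] [Fintype n] [DecidableEq m] [DecidableEq n] [CommRing α]

theorem mul_nonsing_inv_one_sub_mul_comm (A : Matrix m n α) (B : Matrix n m α)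
    (h : IsUnit (1 - A * B).det) : A * (1 - B * A)⁻¹ = (1 - A * B)⁻¹ * A := by
  have h' : IsUnit (1 - B * A).det := det_one_sub_mul_comm A B ▸ h
  have hcomm : (1 - A * B) * A = A * (1 - B * A) := by
    rw [Matrix.sub_mul, Matrix.mul_sub, Matrix.one_mul, Matrix.mul_one, Matrix.mul_assoc]
  calc A * (1 - B * A)⁻¹ = (1 - A * B)⁻¹ * ((1 - A * B) * A * (1 - B * A)⁻¹) := by
        rw [Matrix.mul_assoc, nonsing_inv_mul_cancel_left _ _ h]
    _ = (1 - A * B)⁻¹ * A := by rw [hcomm, mul_nonsing_inv_cancel_right _ _ h']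

theorem one_sub_mul_eq_of_isUnit_det_one_sub_mul (A : Matrix m n α) (B X : Matrix n m α)
    (Z : Matrix m n α) (h : IsUnit (1 - A * B).det) :
    1 - X * Z = (1 + X * A) * (1 - B * A)⁻¹ * (1 + B * Z) - (X + B) * (1 - A * B)⁻¹ * (Z + A) := by
  have h' : IsUnit (1 - B * A).det := det_one_sub_mul_comm A B ▸ h
  have hAQ : ∀ Y : Matrix n m α, Y * A * (1 - B * A)⁻¹ = Y * (1 - A * B)⁻¹ * A := fun Y => by
    rw [Matrix.mul_assoc, mul_nonsing_inv_one_sub_mul_comm A B h, Matrix.mul_assoc]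
  have hQB : (1 - B * A)⁻¹ * B = B * (1 - A * B)⁻¹ :=
    (mul_nonsing_inv_one_sub_mul_comm B A h').symm
  have hQinv := nonsing_inv_mul _ h'
  rw [Matrix.mul_sub, Matrix.mul_one, ← Matrix.mul_assoc, hQB] at hQinv
  have hPinv := nonsing_inv_mul _ h
  rw [Matrix.mul_sub, Matrix.mul_one] at hPinv
  calc 1 - X * Z = ((1 - B * A)⁻¹ - B * (1 - A * B)⁻¹ * A)
        - X * ((1 - A * B)⁻¹ - (1 - A * B)⁻¹ * (A * B)) * Z := by rw [hQinv, hPinv, Matrix.mul_one]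
    _ = _ := by
      simp only [Matrix.mul_add, Matrix.add_mul, Matrix.mul_sub, Matrix.sub_mul, Matrix.mul_one,
        Matrix.one_mul, ← Matrix.mul_assoc, hAQ, hQB]
      abel

theorem isUnit_det_one_sub_mul_of_norm_mul_lt_one {𝕜 : Type*} [RCLike 𝕜] {A : Matrix m n 𝕜}
    {B : Matrix n m 𝕜} (h : ‖A‖ * ‖B‖ < 1) : IsUnit (1 - A * B).det :=
  (isUnit_iff_isUnit_det _).mp <| isUnit_one_sub_of_norm_lt_one <| (l2_opNorm_mul A B).trans_lt h

theorem isUnit_det_one_sub_mul_conjTranspose_self {𝕜 : Type*} [RCLike 𝕜] {A : Matrix m n 𝕜}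
    (hA : ‖A‖ < 1) : IsUnit (1 - A * Aᴴ).det :=
  isUnit_det_one_sub_mul_of_norm_mul_lt_one <| by
    rw [l2_opNorm_conjTranspose]; exact mul_lt_one_of_nonneg_of_lt_one_left (norm_nonneg A) hA hA.le

theorem isUnit_det_one_add_conjTranspose_mul {𝕜 : Type*} [RCLike 𝕜] {A B : Matrix m n 𝕜}
    (hA : ‖A‖ < 1) (hB : ‖B‖ < 1) : IsUnit (1 + Aᴴ * B).det := by
  rw [← sub_neg_eq_add, ← Matrix.neg_mul]
  refine isUnit_det_one_sub_mul_of_norm_mul_lt_one ?_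
  rw [norm_neg, l2_opNorm_conjTranspose]
  exact mul_lt_one_of_nonneg_of_lt_one_left (norm_nonneg A) hA hB.le

namespace PosSemidef

variable {𝕜 : Type*} [RCLike 𝕜] {A : Matrix n n 𝕜} (hA : A.PosSemidef)
include hA

theorem posSemidef_sqrt : hA.sqrt.PosSemidef := by
  unfold Matrix.PosSemidef.sqrt
  have hD : (diagonal ((↑) ∘ (√·) ∘ hA.1.eigenvalues) : Matrix n n 𝕜).PosSemidef := by
    rw [posSemidef_diagonal_iff]
    exact fun i => by simp only [Function.comp_apply]; exact_mod_cast Real.sqrt_nonneg _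
  simpa [Matrix.star_eq_conjTranspose] using
    hD.mul_mul_conjTranspose_same (hA.1.eigenvectorUnitary : Matrix n n 𝕜)

theorem sqrt_mul_self : hA.sqrt * hA.sqrt = A := by
  unfold Matrix.PosSemidef.sqrt
  have hDD : (diagonal ((↑) ∘ (√·) ∘ hA.1.eigenvalues) : Matrix n n 𝕜) *
      diagonal ((↑) ∘ (√·) ∘ hA.1.eigenvalues) = diagonal (RCLike.ofReal ∘ hA.1.eigenvalues) := by
    rw [diagonal_mul_diagonal]
    congr 1
    funext i
    simp only [Function.comp_apply]
    rw [← RCLike.ofReal_mul, Real.mul_self_sqrt (hA.eigenvalues_nonneg i)]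
  conv_rhs => rw [hA.1.spectral_theorem]
  simp only [Matrix.mul_assoc]
  rw [← Matrix.mul_assoc _ hA.1.eigenvectorUnitary.1, Unitary.coe_star_mul_self, Matrix.one_mul,
    ← Matrix.mul_assoc (diagonal _) (diagonal _), hDD]
  simp [Unitary.conjStarAlgAut_apply, Matrix.mul_assoc]

theorem sqrt_inv_mul_sqrt_inv : hA.sqrt⁻¹ * hA.sqrt⁻¹ = A⁻¹ := by
  rw [← Matrix.mul_inv_rev, hA.sqrt_mul_self]

theorem sqrt_mul_inv_mul_sqrt (h : IsUnit A.det) : hA.sqrt * A⁻¹ * hA.sqrt = 1 := by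
  have hS : IsUnit hA.sqrt.det :=
    isUnit_of_mul_isUnit_left (by rwa [← det_mul, hA.sqrt_mul_self])
  rw [← hA.sqrt_inv_mul_sqrt_inv, ← Matrix.mul_assoc, mul_nonsing_inv _ hS, Matrix.one_mul,
    nonsing_inv_mul _ hS]

end PosSemidef

end Matrix

theorem conjTranspose_ballMobius_mul_ballMobius {p q : ℕ} (A : Matrix (Fin p) (Fin q) ℂ)
    (hP : (1 - A * Aᴴ).PosSemidef) (hQ : (1 - Aᴴ * A).PosSemidef) (W Z : Matrix (Fin p) (Fin q) ℂ) :
    (ballMobius A hP hQ W)ᴴ * ballMobius A hP hQ Z =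
      hQ.sqrt * (1 + Wᴴ * A)⁻¹ * ((Wᴴ + Aᴴ) * (1 - A * Aᴴ)⁻¹ * (Z + A)) * (1 + Aᴴ * Z)⁻¹ *
        hQ.sqrt := by
  rw [← hP.sqrt_inv_mul_sqrt_inv]
  simp only [ballMobius, conjTranspose_mul, conjTranspose_add, conjTranspose_one,
    conjTranspose_nonsing_inv, conjTranspose_conjTranspose, hP.posSemidef_sqrt.isHermitian.eq,
    hQ.posSemidef_sqrt.isHermitian.eq, Matrix.mul_assoc]

/-- The key identity `I - H_A(W)* H_A(Z)
  = (I-A*A)^{1/2}(I+W*A)⁻¹(I-W*Z)(I+A*Z)⁻¹(I-A*A)^{1/2}`. -/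
theorem ballMobius_key_identity {p q : ℕ} (A Z W : Matrix (Fin p) (Fin q) ℂ)
    (hA : ‖A‖ < 1) (hZ : ‖Z‖ < 1) (hW : ‖W‖ < 1)
    (hP : (1 - A * Aᴴ).PosSemidef) (hQ : (1 - Aᴴ * A).PosSemidef) :
    1 - (ballMobius A hP hQ W)ᴴ * ballMobius A hP hQ Z =
      hQ.sqrt * (1 + Wᴴ * A)⁻¹ * (1 - Wᴴ * Z) * (1 + Aᴴ * Z)⁻¹ * hQ.sqrt := by
  have hPu := isUnit_det_one_sub_mul_conjTranspose_self hA
  have hQu : IsUnit (1 - Aᴴ * A).det := det_one_sub_mul_comm A Aᴴ ▸ hPu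
  have hNu := isUnit_det_one_add_conjTranspose_mul hW hA
  have hMu := isUnit_det_one_add_conjTranspose_mul hA hZ
  have hone : hQ.sqrt * (1 + Wᴴ * A)⁻¹ * ((1 + Wᴴ * A) * (1 - Aᴴ * A)⁻¹ * (1 + Aᴴ * Z)) *
      (1 + Aᴴ * Z)⁻¹ * hQ.sqrt = 1 := by
    simp only [Matrix.mul_assoc, nonsing_inv_mul_cancel_left _ _ hNu,
      mul_nonsing_inv_cancel_left _ _ hMu]
    rw [← Matrix.mul_assoc, hQ.sqrt_mul_inv_mul_sqrt hQu]
  rw [conjTranspose_ballMobius_mul_ballMobius,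
    one_sub_mul_eq_of_isUnit_det_one_sub_mul A Aᴴ Wᴴ Z hPu, Matrix.mul_sub, Matrix.sub_mul, Matrix.sub_mul, hone]
end

section
/- Let D = {z ∈ ℂ : |z| < 1} and let Ω₁ = D, and for some R > 1 suppose an automorphism condition: if φ is a Möbius automorphism of D given by φ(z) = e^{iθ}(z - a)(1 - conj(a) z)⁻¹, and the matrix extension φ(X) = e^{iθ}(X - aI)(I - conj(a) X)⁻¹ maps {X ∈ M₂(ℂ) : ‖X‖ < R} into itself, then a = 0. -/
/-!
On scalar matrices `z • 1` the matrix extension is just the scalar Möbius map, and the operator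
norm of `z • 1` is `|z|`, so it suffices to find `|z| < R` with `|φ(z)| = R`. For `a ≠ 0` take
`z = φ⁻¹(w)` with `w = R a / |a|`: then `|z| = (R + |a|) / (1 + R |a|)`, which is `< R`
because `R > 1`.
-/

open scoped Matrix.Norms.L2Operator ComplexConjugate

theorem Matrix.inv_smul_one {n K : Type*} [Fintype n] [DecidableEq n] [Field K] (c : K) :
    (c • (1 : Matrix n n K))⁻¹ = c⁻¹ • 1 := by
  rcases eq_or_ne c 0 with rfl | hc
  · simp
  · exact inv_eq_left_inv (by rw [smul_mul_smul_comm, one_mul, inv_mul_cancel₀ hc, one_smul])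

theorem Matrix.mobius_smul_one {n K : Type*} [Fintype n] [DecidableEq n] [Field K]
    (u a c z : K) :
    u • ((z • (1 : Matrix n n K) - a • 1) * (1 - c • z • (1 : Matrix n n K))⁻¹) =
      (u * ((z - a) / (1 - c * z))) • 1 := by
  have hden : (1 : Matrix n n K) - c • z • 1 = (1 - c * z) • 1 := by
    rw [smul_smul, sub_smul, one_smul]
  rw [← sub_smul, hden, inv_smul_one, smul_mul_smul_comm, one_mul, smul_smul, div_eq_mul_inv]

theorem Complex.mobius_inverse {a w : ℂ} (ha : ‖a‖ ≠ 1) (hw : 1 + conj a * w ≠ 0) :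
    ((w + a) / (1 + conj a * w) - a) / (1 - conj a * ((w + a) / (1 + conj a * w))) = w := by
  have h1 : 1 - conj a * a ≠ 0 := by
    rw [← Complex.normSq_eq_conj_mul_self, Complex.normSq_eq_norm_sq, sub_ne_zero]
    exact_mod_cast fun h => ha (by nlinarith [norm_nonneg a])
  have hnum : (w + a) / (1 + conj a * w) - a = w * (1 - conj a * a) / (1 + conj a * w) := by
    rw [eq_div_iff hw, sub_mul, div_mul_cancel₀ _ hw]; ring
  have hden :
      1 - conj a * ((w + a) / (1 + conj a * w)) = (1 - conj a * a) / (1 + conj a * w) := by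
    rw [eq_div_iff hw, sub_mul, mul_assoc, div_mul_cancel₀ _ hw]; ring
  rw [hnum, hden, div_div_div_cancel_right₀ hw, mul_div_cancel_right₀ _ h1]

theorem Complex.exists_norm_lt_norm_mobius_eq {a : ℂ} {R : ℝ} (ha : ‖a‖ < 1) (ha0 : a ≠ 0)
    (hR : 1 < R) : ∃ z : ℂ, ‖z‖ < R ∧ ‖(z - a) / (1 - conj a * z)‖ = R := by
  set t := ‖a‖ with ht
  have ht0 : 0 < t := norm_pos_iff.mpr ha0
  have htC : (t : ℂ) ≠ 0 := by exact_mod_cast ht0.ne'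
  set w : ℂ := ((R / t : ℝ) : ℂ) * a
  have hcw : conj a * w = ((R * t : ℝ) : ℂ) := by
    have hc : conj a * a = ((t ^ 2 : ℝ) : ℂ) := by
      rw [← Complex.normSq_eq_conj_mul_self, Complex.normSq_eq_norm_sq]
    rw [mul_left_comm, hc]; push_cast; field_simp
  have hden : (0 : ℝ) < 1 + R * t := by positivity
  have hw : 1 + conj a * w ≠ 0 := by rw [hcw]; exact_mod_cast hden.ne'
  refine ⟨(w + a) / (1 + conj a * w), ?_, ?_⟩
  · have hwa : w + a = (((R + t) / t : ℝ) : ℂ) * a := by simp only [w]; push_cast; field_simp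
    rw [hwa, hcw, norm_div, norm_mul, ← ht, ← Complex.ofReal_one, ← Complex.ofReal_add,
      Complex.norm_real, Complex.norm_real, Real.norm_of_nonneg (by positivity),
      Real.norm_of_nonneg hden.le, div_mul_cancel₀ _ ht0.ne', div_lt_iff₀ hden]
    nlinarith [mul_pos ht0 (mul_pos (sub_pos.2 hR) (by linarith : (0 : ℝ) < R + 1))]
  · rw [Complex.mobius_inverse ha.ne hw, norm_mul, Complex.norm_real, ← ht,
      Real.norm_of_nonneg (by positivity), div_mul_cancel₀ _ ht0.ne']

/-- If the matrix extension of the Möbius automorphism `z ↦ e^{iθ}(z-a)(1-conj a · z)⁻¹`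
maps the radius-`R` ball of `M₂(ℂ)` (for some `R > 1`) into itself, then `a = 0`. -/
theorem mobius_extension_radius_R (R : ℝ) (hR : 1 < R) (a : ℂ) (ha : ‖a‖ < 1) (θ : ℝ)
    (h : Set.MapsTo
      (fun X : Matrix (Fin 2) (Fin 2) ℂ =>
        Complex.exp (θ * Complex.I) • ((X - a • 1) * (1 - (starRingEnd ℂ) a • X)⁻¹))
      {X : Matrix (Fin 2) (Fin 2) ℂ | ‖X‖ < R} {X : Matrix (Fin 2) (Fin 2) ℂ | ‖X‖ < R}) :
    a = 0 := by
  by_contra ha0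
  obtain ⟨z, hz, hφz⟩ := Complex.exists_norm_lt_norm_mobius_eq ha ha0 hR
  have himage := h (show ‖z • (1 : Matrix (Fin 2) (Fin 2) ℂ)‖ < R by
    rwa [norm_smul, norm_one, mul_one])
  simp only [Set.mem_ofPred_eq, Matrix.mobius_smul_one, norm_smul, norm_one, mul_one, norm_mul,
    Complex.norm_exp_ofReal_mul_I, one_mul, hφz] at himage
  exact himage.false
end
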